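/- arXiv:2401.15903 — 6 statements merged into one kernel-verified Lean document; each statement's English description precedes it below -/
import Mathlib

section
/- Let ν be a probability measure on (Fin d → ℝ) concentrated on nonnegative vectors, and let μ be its Poisson compound on (Fin d → ℕ). Then for every t : Fin d → ℂ with (t j).re ≤ 0 for all j, one has ∫ exp(∑ j, t j · (x j : ℂ)) dμ(x) = ∫ exp(∑ j, (y j : ℂ) · (exp(t j) − 1)) dν(y). -/
/-!
Conditionally on `y`, the coordinates are independent Poisson variables with rates `y j`, so the
inner integral factorises into one-dimensional Poisson Laplace transforms
`∫ e^{z n} dPo(r)(n) = exp (r (e^z - 1))`, a rearranged exponential series. Integrating over `ν`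
is Fubini for the composition with the Poisson kernel, justified because `|e^{⟨t,x⟩}| ≤ 1` when
every `t j` has nonpositive real part.
-/

open MeasureTheory ProbabilityTheory

/-- Poisson compound of a measure `ν` on `Fin d → ℝ`: conditionally on `y ~ ν`, the
coordinates are independent Poisson variables with rates `y j`. -/
noncomputable def poissonCompound (d : ℕ) (ν : Measure (Fin d → ℝ)) : Measure (Fin d → ℕ) :=
  ν.bind (fun y => Measure.pi (fun j => (poissonPMF (Real.toNNReal (y j))).toMeasure))

open scoped NNReal

namespace MeasureTheory.Measure

variable {α β E : Type*} {mα : MeasurableSpace α} {mβ : MeasurableSpace β}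
  [NormedAddCommGroup E] [NormedSpace ℝ E]

theorem integral_comp {μ : Measure α} {κ : Kernel α β} {f : β → E}
    (hf : Integrable f (κ ∘ₘ μ)) : ∫ x, f x ∂(κ ∘ₘ μ) = ∫ a, ∫ x, f x ∂κ a ∂μ := by
  rw [comp_eq_comp_const_apply] at hf ⊢
  rw [Kernel.integral_comp hf, Kernel.const_apply]

end MeasureTheory.Measure

theorem Measurable.measure_pi {α ι : Type*} {β : ι → Type*} [Fintype ι] {mα : MeasurableSpace α}
    [∀ i, MeasurableSpace (β i)] {μ : ∀ i, α → Measure (β i)}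
    [∀ i a, IsProbabilityMeasure (μ i a)] (hμ : ∀ i, Measurable (μ i)) :
    Measurable fun a ↦ Measure.pi fun i ↦ μ i a := by
  refine .measure_of_isPiSystem_of_isProbabilityMeasure generateFrom_pi.symm isPiSystem_pi ?_
  rintro _ ⟨s, hs, rfl⟩
  simp_rw [Measure.pi_pi]
  exact Finset.measurable_prod _ fun i _ ↦ Measure.measurable_coe (hs i trivial) |>.comp (hμ i)

namespace ProbabilityTheory

theorem measurable_poissonMeasure : Measurable poissonMeasure := by
  refine Measure.measurable_of_measurable_coe _ fun s hs ↦ ?_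
  simp_rw [poissonMeasure, Measure.sum_apply _ hs, Measure.smul_apply,
    Measure.dirac_apply' _ hs, smul_eq_mul]
  exact .tsum fun n ↦ by fun_prop

set_option linter.deprecated false in
theorem toMeasure_poissonPMF (r : ℝ≥0) : (poissonPMF r).toMeasure = poissonMeasure r :=
  Measure.ext_of_singleton fun n ↦ by
    rw [PMF.toMeasure_apply_singleton _ _ (measurableSet_singleton n), poissonMeasure_singleton]
    rfl

theorem integral_cexp_mul_poissonMeasure (r : ℝ≥0) (z : ℂ) :
    ∫ n, Complex.exp (z * n) ∂poissonMeasure r = Complex.exp (r * (Complex.exp z - 1)) := by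
  rw [integral_poissonMeasure]
  calc ∑' n : ℕ, (Real.exp (-r) * r ^ n / n.factorial) • Complex.exp (z * n)
  _ = ∑' n : ℕ, Real.exp (-r) * ((r * Complex.exp z) ^ n / n.factorial) := by
      congr with n
      rw [Complex.real_smul, mul_pow, ← Complex.exp_nat_mul]
      push_cast
      ring_nf
  _ = Real.exp (-r) * Complex.exp (r * Complex.exp z) := by
      rw [tsum_mul_left, (NormedSpace.expSeries_div_hasSum_exp _).tsum_eq, Complex.exp_eq_exp_ℂ]
  _ = Complex.exp (r * (Complex.exp z - 1)) := by
      rw [Complex.ofReal_exp, ← Complex.exp_add]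
      push_cast
      ring_nf

noncomputable def poissonKernel (ι : Type*) [Fintype ι] : Kernel (ι → ℝ) (ι → ℕ) where
  toFun y := Measure.pi fun j ↦ poissonMeasure (y j).toNNReal
  measurable' := Measurable.measure_pi fun j ↦
    measurable_poissonMeasure.comp (measurable_real_toNNReal.comp (measurable_pi_apply j))

instance {ι : Type*} [Fintype ι] : IsMarkovKernel (poissonKernel ι) :=
  ⟨fun _ ↦ inferInstanceAs (IsProbabilityMeasure (Measure.pi _))⟩

theorem integral_cexp_poissonKernel {ι : Type*} [Fintype ι] (y : ι → ℝ) (t : ι → ℂ) :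
    ∫ x, Complex.exp (∑ j, t j * x j) ∂poissonKernel ι y
      = Complex.exp (∑ j, ((y j).toNNReal : ℂ) * (Complex.exp (t j) - 1)) := by
  simp_rw [Complex.exp_sum, ← integral_cexp_mul_poissonMeasure]
  exact integral_fintype_prod_eq_prod (fun j (n : ℕ) ↦ Complex.exp (t j * n))

end ProbabilityTheory

theorem poissonCompound_eq_comp (d : ℕ) (ν : Measure (Fin d → ℝ)) :
    poissonCompound d ν = poissonKernel (Fin d) ∘ₘ ν := by
  simp_rw [poissonCompound, toMeasure_poissonPMF]
  rfl

theorem norm_cexp_sum_mul_natCast_le_one {ι : Type*} [Fintype ι] {t : ι → ℂ}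
    (ht : ∀ j, (t j).re ≤ 0) (x : ι → ℕ) : ‖Complex.exp (∑ j, t j * x j)‖ ≤ 1 := by
  rw [Complex.norm_exp, Real.exp_le_one_iff, Complex.re_sum]
  exact Finset.sum_nonpos fun j _ ↦ by
    simpa using mul_nonpos_of_nonpos_of_nonneg (ht j) (x j).cast_nonneg

/-- Laplace transform of a Poisson compound: for `t` with nonpositive real parts,
`∫ e^{⟨t,x⟩} dμ(x) = ∫ e^{∑ yⱼ (e^{tⱼ} − 1)} dν(y)`. -/
theorem laplaceTransform_poissonCompound
    (d : ℕ) (ν : Measure (Fin d → ℝ)) [IsProbabilityMeasure ν]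
    (hν : ∀ᵐ y ∂ν, ∀ j, 0 ≤ y j)
    (t : Fin d → ℂ) (ht : ∀ j, (t j).re ≤ 0) :
    ∫ x, Complex.exp (∑ j, t j * (x j : ℂ)) ∂(poissonCompound d ν)
      = ∫ y, Complex.exp (∑ j, (y j : ℂ) * (Complex.exp (t j) - 1)) ∂ν := by
  have hint : Integrable (fun x : Fin d → ℕ ↦ Complex.exp (∑ j, t j * x j))
      (poissonKernel _ ∘ₘ ν) :=
    .of_bound .of_discrete 1 (ae_of_all _ (norm_cexp_sum_mul_natCast_le_one ht))
  rw [poissonCompound_eq_comp, Measure.integral_comp hint]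
  refine integral_congr_ae ?_
  filter_upwards [hν] with y hy
  simp_rw [integral_cexp_poissonKernel, Real.coe_toNNReal _ (hy _)]
end

section
/- Let U be a real d×p matrix of rank p and Ũ a real d×p' matrix such that U·Uᵀ = Ũ·Ũᵀ. Then there exists a real p×p' matrix O with orthonormal rows, i.e. O·Oᵀ = 1 (the p×p identity), such that Ũ = U·O. -/
open Matrix

/-- If `U` has full column rank `p` and `UUᵀ = ŨŨᵀ`, then `Ũ = U·O` for some matrix
`O` with orthonormal rows (`OOᵀ = 1`). -/
theorem exists_semiOrthogonal_of_cov_eq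
    (d p p' : ℕ) (U : Matrix (Fin d) (Fin p) ℝ) (hU : U.rank = p)
    (U' : Matrix (Fin d) (Fin p') ℝ) (h : U * Uᵀ = U' * U'ᵀ) :
    ∃ O : Matrix (Fin p) (Fin p') ℝ, O * Oᵀ = 1 ∧ U' = U * O := by
  set G : Matrix (Fin p) (Fin p) ℝ := Uᵀ * U with hG
  have hGrank : G.rank = p := by rw [hG, rank_transpose_mul_self, hU]
  have hGunit : IsUnit G := by
    rw [← mulVec_surjective_iff_isUnit]
    have hrange : LinearMap.range G.mulVecLin = ⊤ := by
      apply Submodule.eq_top_of_finrank_eq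
      rw [show Module.finrank ℝ ↥(LinearMap.range G.mulVecLin) = G.rank from rfl, hGrank]
      simp
    intro v
    obtain ⟨y, hy⟩ := LinearMap.range_eq_top.mp hrange v
    exact ⟨y, hy⟩
  have hGG : G⁻¹ * G = 1 := nonsing_inv_mul G (isUnit_iff_isUnit_det G |>.mp hGunit)
  have hGGinv : G * G⁻¹ = 1 := mul_nonsing_inv G (isUnit_iff_isUnit_det G |>.mp hGunit)
  have hGsymm : G⁻¹ᵀ = G⁻¹ := by
    rw [transpose_nonsing_inv]
    congr 1
    rw [hG, transpose_mul, transpose_transpose]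
  refine ⟨G⁻¹ * Uᵀ * U', ?_, ?_⟩
  · have hOT : (G⁻¹ * Uᵀ * U')ᵀ = U'ᵀ * (U * G⁻¹) := by
      simp only [transpose_mul, transpose_transpose, hGsymm, Matrix.mul_assoc]
    have X : Uᵀ * U' * (U'ᵀ * U) = G * G := by
      rw [Matrix.mul_assoc Uᵀ U' (U'ᵀ * U), ← Matrix.mul_assoc U' U'ᵀ U,
        ← Matrix.mul_assoc Uᵀ (U' * U'ᵀ) U, ← h, hG]
      simp only [Matrix.mul_assoc]
    rw [hOT]
    calc (G⁻¹ * Uᵀ * U') * (U'ᵀ * (U * G⁻¹))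
        = G⁻¹ * (Uᵀ * U' * (U'ᵀ * U)) * G⁻¹ := by simp only [Matrix.mul_assoc]
      _ = G⁻¹ * (G * G) * G⁻¹ := by rw [X]
      _ = 1 := by rw [← Matrix.mul_assoc G⁻¹ G G, hGG, Matrix.one_mul, hGGinv]
  · set M : Matrix (Fin d) (Fin d) ℝ := U * G⁻¹ * Uᵀ with hM
    have hMsymm : Mᵀ = M := by
      simp only [hM, transpose_mul, transpose_transpose, hGsymm, Matrix.mul_assoc]
    have hMU : M * (U * Uᵀ) = U * Uᵀ := by
      calc M * (U * Uᵀ) = U * (G⁻¹ * (Uᵀ * U)) * Uᵀ := by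
            simp only [hM, Matrix.mul_assoc]
        _ = U * Uᵀ := by rw [← hG, hGG, Matrix.mul_one]
    have hMU' : M * (U' * U'ᵀ) = U' * U'ᵀ := by rw [← h]; exact hMU
    have key : (M * U' - U') * (M * U' - U')ᵀ = 0 := by
      have hAT : (M * U' - U')ᵀ = U'ᵀ * M - U'ᵀ := by
        rw [transpose_sub, transpose_mul, hMsymm]
      rw [hAT, Matrix.sub_mul, Matrix.mul_sub, Matrix.mul_sub]
      have t1 : M * U' * (U'ᵀ * M) = U' * U'ᵀ * M := by
        rw [Matrix.mul_assoc M U' (U'ᵀ * M), ← Matrix.mul_assoc U' U'ᵀ M,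
          ← Matrix.mul_assoc M (U' * U'ᵀ) M, hMU']
      have t2 : M * U' * U'ᵀ = U' * U'ᵀ := by rw [Matrix.mul_assoc, hMU']
      have t3 : U' * (U'ᵀ * M) = U' * U'ᵀ * M := by rw [Matrix.mul_assoc]
      rw [t1, t2, t3]
      abel
    have hzero : M * U' - U' = 0 := by
      have h0 : (M * U' - U') * (M * U' - U')ᴴ = 0 := by
        rw [conjTranspose_eq_transpose_of_trivial]; exact key
      exact (Matrix.self_mul_conjTranspose_eq_zero).mp h0
    have hMU'eq : M * U' = U' := sub_eq_zero.mp hzero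
    rw [Matrix.mul_assoc]
    calc U' = M * U' := hMU'eq.symm
      _ = U * (G⁻¹ * (Uᵀ * U')) := by rw [hM]; simp only [Matrix.mul_assoc]
end

section
/- Let U be a real d×p matrix and V a real d×q matrix such that the block matrix [U V] (of size d×(p+q)) has rank p+q. Let Ũ be a real d×p' matrix and Ṽ a real d×q' matrix such that U·Uᵀ = Ũ·Ũᵀ and U·Uᵀ + V·Vᵀ = Ũ·Ũᵀ + Ṽ·Ṽᵀ. Then there exist a real p×p' matrix O₁ with O₁·O₁ᵀ = 1 (the p×p identity) and a real q×q' matrix O₂ with O₂·O₂ᵀ = 1 (the q×q identity) such that Ũ = U·O₁ and Ṽ = V·O₂. -/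
/-!
Since `[U V]` has full column rank it has a left inverse, whose two row blocks are left inverses
`L₁` of `U` and `L₂` of `V`. Whenever `L * A = 1` and `A * Aᵀ = B * Bᵀ`, the matrix `O = L * B`
satisfies `O * Oᵀ = (L * A) * (L * A)ᵀ = 1`, and `C = B - A * O` has `C * Cᵀ = 0`, hence `C = 0`.
Subtracting the first covariance equality from the second gives `V * Vᵀ = Ṽ * Ṽᵀ`, so this applies
to both blocks.
-/

open Matrix

namespace Matrix

variable {d m n n₁ n₂ : Type*} [Fintype d] [Fintype n]

theorem exists_mul_eq_one_of_rank_eq_card {K : Type*} [Field K] [DecidableEq n]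
    (A : Matrix d n K) (h : A.rank = Fintype.card n) : ∃ L : Matrix n d K, L * A = 1 := by
  have hsurj : Function.Surjective Aᵀ.mulVec := by
    rw [← coe_mulVecLin, ← LinearMap.range_eq_top]
    apply Submodule.eq_top_of_finrank_eq
    rw [← rank, rank_transpose, h, Module.finrank_pi]
  obtain ⟨B, hB⟩ := mulVec_surjective_iff_exists_right_inverse.mp hsurj
  exact ⟨Bᵀ, by simpa using congrArg transpose hB⟩

theorem toRows_mul_eq_one_of_mul_fromCols_eq_one {R : Type*} [Semiring R] [Fintype n₁]
    [Fintype n₂] [DecidableEq n₁] [DecidableEq n₂] {L : Matrix (n₁ ⊕ n₂) d R}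
    {A₁ : Matrix d n₁ R} {A₂ : Matrix d n₂ R} (h : L * fromCols A₁ A₂ = 1) :
    L.toRows₁ * A₁ = 1 ∧ L.toRows₂ * A₂ = 1 := by
  rw [← fromRows_toRows L, fromRows_mul_fromCols, ← fromBlocks_one, fromBlocks_inj] at h
  exact ⟨h.1, h.2.2.2⟩

theorem self_mul_transpose_eq_zero {R : Type*} [Ring R] [LinearOrder R] [IsStrictOrderedRing R]
    {A : Matrix m n R} : A * Aᵀ = 0 ↔ A = 0 :=
  ⟨fun h => ext fun i j => congr_fun (dotProduct_self_eq_zero.1 (congr_fun₂ h i i)) j,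
    fun h => h ▸ Matrix.zero_mul _⟩

theorem exists_eq_mul_of_mul_transpose_eq {R : Type*} [CommRing R] [LinearOrder R]
    [IsStrictOrderedRing R] [Fintype m] [DecidableEq n] {L : Matrix n d R}
    {A : Matrix d n R} {B : Matrix d m R} (hL : L * A = 1) (h : A * Aᵀ = B * Bᵀ) :
    ∃ O : Matrix n m R, O * Oᵀ = 1 ∧ B = A * O := by
  set O := L * B
  have horth : O * Oᵀ = 1 :=
    calc L * B * (L * B)ᵀ = L * (B * Bᵀ) * Lᵀ := by simp only [transpose_mul, Matrix.mul_assoc]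
      _ = (L * A) * (L * A)ᵀ := by rw [← h]; simp only [transpose_mul, Matrix.mul_assoc]
      _ = 1 := by rw [hL, transpose_one, Matrix.one_mul]
  have hleft : A * O * Bᵀ = A * Aᵀ := by
    rw [Matrix.mul_assoc, Matrix.mul_assoc, ← h, ← Matrix.mul_assoc L, hL, Matrix.one_mul]
  have hright : B * (A * O)ᵀ = A * Aᵀ := by
    simpa only [transpose_mul, transpose_transpose, Matrix.mul_assoc] using
      congrArg transpose hleft
  have hdiag : A * O * (A * O)ᵀ = A * Aᵀ := by
    rw [transpose_mul, Matrix.mul_assoc, ← Matrix.mul_assoc O, horth, Matrix.one_mul]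
  have hzero : (B - A * O) * (B - A * O)ᵀ = 0 := by
    rw [transpose_sub, Matrix.sub_mul, Matrix.mul_sub, Matrix.mul_sub, hleft, hright, hdiag, ← h]
    abel
  exact ⟨O, horth, sub_eq_zero.mp (self_mul_transpose_eq_zero.mp hzero)⟩

end Matrix

/-- Block-wise identifiability of the misspecified linear contrastive model: if
`[U V]` has full column rank `p + q`, `UUᵀ = ŨŨᵀ` and `UUᵀ + VVᵀ = ŨŨᵀ + ṼṼᵀ`, then
`Ũ = U·O₁` and `Ṽ = V·O₂` for matrices `O₁, O₂` with orthonormal rows. -/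
theorem linear_contrastive_identifiability_misspec
    (d p q p' q' : ℕ)
    (U : Matrix (Fin d) (Fin p) ℝ) (V : Matrix (Fin d) (Fin q) ℝ)
    (hrank : (Matrix.fromCols U V).rank = p + q)
    (U' : Matrix (Fin d) (Fin p') ℝ) (V' : Matrix (Fin d) (Fin q') ℝ)
    (h1 : U * Uᵀ = U' * U'ᵀ)
    (h2 : U * Uᵀ + V * Vᵀ = U' * U'ᵀ + V' * V'ᵀ) :
    ∃ (O₁ : Matrix (Fin p) (Fin p') ℝ) (O₂ : Matrix (Fin q) (Fin q') ℝ),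
      O₁ * O₁ᵀ = 1 ∧ O₂ * O₂ᵀ = 1 ∧ U' = U * O₁ ∧ V' = V * O₂ := by
  have hV : V * Vᵀ = V' * V'ᵀ := by
    rw [h1] at h2
    exact add_left_cancel h2
  obtain ⟨L, hL⟩ := exists_mul_eq_one_of_rank_eq_card (fromCols U V) (by simpa using hrank)
  obtain ⟨hLU, hLV⟩ := toRows_mul_eq_one_of_mul_fromCols_eq_one hL
  obtain ⟨O₁, hO₁, hU'⟩ := exists_eq_mul_of_mul_transpose_eq hLU h1
  obtain ⟨O₂, hO₂, hV'⟩ := exists_eq_mul_of_mul_transpose_eq hLV hV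
  exact ⟨O₁, O₂, hO₁, hO₂, hU', hV'⟩
end

section
/- Let ν and ν̃ be probability measures on (Fin 2 → ℝ), both concentrated on vectors with coordinates in [0,1]. Then the Bernoulli compound of ν equals the Bernoulli compound of ν̃ (as measures on Fin 2 → Bool) if and only if ∫ y 0 dν = ∫ y 0 dν̃, ∫ y 1 dν = ∫ y 1 dν̃, and ∫ (y 0)·(y 1) dν = ∫ (y 0)·(y 1) dν̃. -/
open MeasureTheory

/-- The Bernoulli measure on `Bool` assigning probability `r` to `true` (for `r ∈ [0,1]`). -/
noncomputable def bernoulliMeasure (r : ℝ) : Measure Bool :=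
  ENNReal.ofReal r • Measure.dirac true + ENNReal.ofReal (1 - r) • Measure.dirac false

/-- Bernoulli compound of a measure `ν` on `Fin 2 → ℝ`: conditionally on `y ~ ν`, the
coordinates are independent Bernoulli variables with success probabilities `y j`. -/
noncomputable def bernoulliCompound (ν : Measure (Fin 2 → ℝ)) : Measure (Fin 2 → Bool) :=
  ν.bind (fun y => Measure.pi fun j => bernoulliMeasure (y j))

/-! Both compounds live on a four-point space, so they agree iff their atoms do, and the atom at
`b` has mass `∫ (p (y 0) (b 0)) * (p (y 1) (b 1)) dν` with `p r true = r`, `p r false = 1 - r`.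
Each factor is affine in its coordinate, so these masses are affine in `∫ y 0`, `∫ y 1` and
`∫ y 0 * y 1`; conversely `∫ y 0 * y 1` is the mass of `(true, true)`, and adding the mass of
`(true, false)`, resp. `(false, true)`, gives `∫ y 0`, resp. `∫ y 1`. -/

open Set unitInterval

def bernoulliMass (r : ℝ) (b : Bool) : ℝ := if b then r else 1 - r

lemma bernoulliMass_eq_affine (r : ℝ) (b : Bool) :
    bernoulliMass r b = (if b then 0 else 1) + (if b then 1 else -1) * r := by
  cases b <;> simp [bernoulliMass, sub_eq_add_neg]

lemma bernoulliMass_mem_unitInterval {r : ℝ} (hr : r ∈ I) (b : Bool) : bernoulliMass r b ∈ I := by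
  cases b
  · exact ⟨sub_nonneg.2 hr.2, sub_le_self 1 hr.1⟩
  · exact hr

@[fun_prop]
lemma measurable_bernoulliMass (b : Bool) : Measurable (bernoulliMass · b) := by
  cases b
  · exact measurable_const.sub measurable_id
  · exact measurable_id

lemma bernoulliMeasure_singleton (r : ℝ) (b : Bool) :
    bernoulliMeasure r {b} = ENNReal.ofReal (bernoulliMass r b) := by
  cases b <;> simp [bernoulliMeasure, bernoulliMass]

instance (r : ℝ) : IsFiniteMeasure (bernoulliMeasure r) := by
  constructor
  simp [bernoulliMeasure]

lemma MeasureTheory.Measure.measurable_of_measurable_coe_singleton {α β : Type*}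
    [MeasurableSpace α] [MeasurableSpace β] [Countable α] [MeasurableSingletonClass α]
    {κ : β → Measure α} (h : ∀ a, Measurable fun x => κ x {a}) : Measurable κ := by
  refine Measure.measurable_of_measurable_coe κ fun s hs => ?_
  simp_rw [← Measure.tsum_indicator_apply_singleton _ s hs]
  refine Measurable.tsum fun a => ?_
  by_cases ha : a ∈ s <;> simp [ha, h a]

section Pi

variable {ι : Type*} [Fintype ι]

lemma pi_bernoulliMeasure_singleton (y : ι → ℝ) (b : ι → Bool) :
    Measure.pi (fun j => bernoulliMeasure (y j)) {b}
      = ∏ j, ENNReal.ofReal (bernoulliMass (y j) (b j)) := by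
  rw [← Set.univ_pi_singleton, Measure.pi_pi]
  simp_rw [bernoulliMeasure_singleton]

lemma measurable_pi_bernoulliMeasure :
    Measurable fun y : ι → ℝ => Measure.pi fun j => bernoulliMeasure (y j) := by
  classical
  refine Measure.measurable_of_measurable_coe_singleton fun b => ?_
  simp_rw [pi_bernoulliMeasure_singleton]
  fun_prop

end Pi

lemma integrable_of_ae_mem_unitInterval {α : Type*} [MeasurableSpace α] {μ : Measure α}
    [IsFiniteMeasure μ] {f : α → ℝ} (hf : Measurable f) (h : ∀ᵐ x ∂μ, f x ∈ I) :
    Integrable f μ :=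
  Integrable.of_bound hf.aestronglyMeasurable 1 <| h.mono fun _ hx => by
    rw [Real.norm_eq_abs, abs_le]; exact ⟨by linarith [hx.1], hx.2⟩

section Compound

variable {ν : Measure (Fin 2 → ℝ)} (hν : ∀ᵐ y ∂ν, ∀ j, y j ∈ Icc (0 : ℝ) 1)
include hν

lemma ae_prod_bernoulliMass_mem_unitInterval (b : Fin 2 → Bool) :
    ∀ᵐ y ∂ν, ∏ j, bernoulliMass (y j) (b j) ∈ I := by
  filter_upwards [hν] with y hy
  rw [Fin.prod_univ_two]
  exact unitInterval.mul_mem (bernoulliMass_mem_unitInterval (hy 0) _)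
    (bernoulliMass_mem_unitInterval (hy 1) _)

lemma bernoulliCompound_singleton [IsFiniteMeasure ν] (b : Fin 2 → Bool) :
    bernoulliCompound ν {b} = ENNReal.ofReal (∫ y, ∏ j, bernoulliMass (y j) (b j) ∂ν) := by
  have hI := ae_prod_bernoulliMass_mem_unitInterval hν b
  rw [bernoulliCompound, Measure.bind_apply (measurableSet_singleton b)
      measurable_pi_bernoulliMeasure.aemeasurable,
    ofReal_integral_eq_lintegral_ofReal
      (integrable_of_ae_mem_unitInterval (by fun_prop) hI) (hI.mono fun _ hy => hy.1)]
  refine lintegral_congr_ae (hν.mono fun y hy => ?_)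
  dsimp only
  rw [pi_bernoulliMeasure_singleton, ENNReal.ofReal_prod_of_nonneg]
  exact fun j _ => (bernoulliMass_mem_unitInterval (hy j) _).1

lemma integral_affine_mul_affine [IsProbabilityMeasure ν] (a₀ s₀ a₁ s₁ : ℝ) :
    ∫ y, (a₀ + s₀ * y 0) * (a₁ + s₁ * y 1) ∂ν
      = a₀ * a₁ + a₁ * s₀ * ∫ y, y 0 ∂ν + a₀ * s₁ * ∫ y, y 1 ∂ν
        + s₀ * s₁ * ∫ y, y 0 * y 1 ∂ν := by
  have hint : ∀ {f : (Fin 2 → ℝ) → ℝ}, Measurable f → (∀ y, (∀ j, y j ∈ I) → f y ∈ I) →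
      Integrable f ν := fun hf hfI =>
    integrable_of_ae_mem_unitInterval hf (hν.mono fun y hy => hfI y hy)
  have h₀ : Integrable (fun y => y 0) ν := hint (by fun_prop) fun y hy => hy 0
  have h₁ : Integrable (fun y => y 1) ν := hint (by fun_prop) fun y hy => hy 1
  have h₀₁ : Integrable (fun y => y 0 * y 1) ν :=
    hint (by fun_prop) fun y hy => unitInterval.mul_mem (hy 0) (hy 1)
  have expand : ∀ y : Fin 2 → ℝ, (a₀ + s₀ * y 0) * (a₁ + s₁ * y 1)
      = a₀ * a₁ + (a₁ * s₀ * y 0 + (a₀ * s₁ * y 1 + s₀ * s₁ * (y 0 * y 1))) := fun y => by ring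
  simp_rw [expand]
  have hc₀ := h₀.const_mul (a₁ * s₀)
  have hc₁ := h₁.const_mul (a₀ * s₁)
  have hc₀₁ := h₀₁.const_mul (s₀ * s₁)
  rw [integral_add (integrable_const _) ?sum, integral_add hc₀ ?sum₁, integral_add hc₁ hc₀₁,
    integral_const, integral_const_mul, integral_const_mul, integral_const_mul]
  case sum₁ => exact hc₁.add hc₀₁
  case sum => exact hc₀.add (hc₁.add hc₀₁)
  simp only [probReal_univ, smul_eq_mul, one_mul]
  ring

end Compound

lemma bernoulliCompound_eq_iff_integral_prod_bernoulliMass {ν ν' : Measure (Fin 2 → ℝ)}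
    [IsFiniteMeasure ν] [IsFiniteMeasure ν'] (hν : ∀ᵐ y ∂ν, ∀ j, y j ∈ Icc (0 : ℝ) 1)
    (hν' : ∀ᵐ y ∂ν', ∀ j, y j ∈ Icc (0 : ℝ) 1) :
    bernoulliCompound ν = bernoulliCompound ν' ↔ ∀ b : Fin 2 → Bool,
      ∫ y, ∏ j, bernoulliMass (y j) (b j) ∂ν = ∫ y, ∏ j, bernoulliMass (y j) (b j) ∂ν' := by
  refine Measure.ext_iff_singleton.trans (forall_congr' fun b => ?_)
  rw [bernoulliCompound_singleton hν, bernoulliCompound_singleton hν',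
    ENNReal.ofReal_eq_ofReal_iff
      (integral_nonneg_of_ae ((ae_prod_bernoulliMass_mem_unitInterval hν b).mono fun _ h => h.1))
      (integral_nonneg_of_ae ((ae_prod_bernoulliMass_mem_unitInterval hν' b).mono fun _ h => h.1))]

/-- Two Bernoulli compounds on `Fin 2 → Bool` agree iff the mixing measures have the
same first moments and the same mixed second moment. -/
theorem bernoulliCompound_eq_iff_moments
    (ν ν' : Measure (Fin 2 → ℝ)) [IsProbabilityMeasure ν] [IsProbabilityMeasure ν']
    (hν : ∀ᵐ y ∂ν, ∀ j, y j ∈ Set.Icc (0 : ℝ) 1)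
    (hν' : ∀ᵐ y ∂ν', ∀ j, y j ∈ Set.Icc (0 : ℝ) 1) :
    bernoulliCompound ν = bernoulliCompound ν'
      ↔ (∫ y, y 0 ∂ν = ∫ y, y 0 ∂ν'
          ∧ ∫ y, y 1 ∂ν = ∫ y, y 1 ∂ν'
          ∧ ∫ y, (y 0) * (y 1) ∂ν = ∫ y, (y 0) * (y 1) ∂ν') := by
  rw [bernoulliCompound_eq_iff_integral_prod_bernoulliMass hν hν']
  simp_rw [Fin.prod_univ_two, bernoulliMass_eq_affine, integral_affine_mul_affine hν,
    integral_affine_mul_affine hν']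
  constructor
  · intro h
    have h₁₁ := h ![true, true]
    have h₁₀ := h ![true, false]
    have h₀₁ := h ![false, true]
    simp only [Fin.isValue, Matrix.cons_val_zero, ↓reduceIte, Matrix.cons_val_one,
      Matrix.cons_val_fin_one, mul_zero, mul_one, zero_mul, add_zero, one_mul, zero_add,
      Bool.false_eq_true, mul_neg, neg_zero, neg_mul] at h₁₁ h₁₀ h₀₁
    exact ⟨by linarith, by linarith, h₁₁⟩
  · rintro ⟨h₀, h₁, h₀₁⟩ b
    rw [h₀, h₁, h₀₁]
end

section
/- Define h : ℝ × ℝ → ℝ by h(a, b) = ∫ sigmoid(a·min(w, 0) + b·max(w, 0)) dγ₁(w), where sigmoid(x) = 1/(1 + exp(−x)) and γ₁ is the standard Gaussian measure on ℝ. Then h is continuous and h is not injective: there exist (a, b) ≠ (a', b') with h(a, b) = h(a', b'). -/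
open MeasureTheory ProbabilityTheory

/-- The logistic sigmoid function `x ↦ 1 / (1 + e^{−x})`. -/
noncomputable def sigmoid (x : ℝ) : ℝ := 1 / (1 + Real.exp (-x))

/-- The expected sigmoid of the piecewise linear function
`g_{a,b}(w) = a·w·1(w ≤ 0) + b·w·1(w > 0)` under a standard Gaussian `w`:
`h(a, b) = ∫ sigmoid(a·min(w,0) + b·max(w,0)) dγ₁(w)`. -/
noncomputable def meanSigmoidPWL (ab : ℝ × ℝ) : ℝ :=
  ∫ w, sigmoid (ab.1 * min w 0 + ab.2 * max w 0) ∂(gaussianReal 0 1)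

/-!
Continuity follows by dominated convergence, the integrand being bounded by `1`.
Non-injectivity comes from the symmetry `w ↦ -w` of the centred Gaussian: it exchanges
`min w 0` and `-max w 0`, so `h(a, b) = h(-b, -a)`, e.g. `h(1, 2) = h(-2, -1)`.
-/

open scoped NNReal

theorem sigmoid_eq_real_sigmoid : sigmoid = Real.sigmoid :=
  funext fun _ => one_div _

instance isNegInvariant_gaussianReal_zero (v : ℝ≥0) : (gaussianReal 0 v).IsNegInvariant :=
  ⟨by simpa [Measure.neg_def] using gaussianReal_map_neg (μ := 0) (v := v)⟩

theorem continuous_meanSigmoidPWL : Continuous meanSigmoidPWL := by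
  unfold meanSigmoidPWL
  rw [sigmoid_eq_real_sigmoid]
  refine continuous_of_dominated (bound := fun _ => 1) (fun ab => ?_) (fun ab => ?_)
    (integrable_const 1) (.of_forall fun w => ?_)
  · exact (continuous_sigmoid.comp (by fun_prop)).aestronglyMeasurable
  · refine .of_forall fun w => ?_
    rw [Real.norm_of_nonneg (Real.sigmoid_nonneg _)]
    exact Real.sigmoid_le_one _
  · exact continuous_sigmoid.comp (by fun_prop)

theorem meanSigmoidPWL_neg_swap (a b : ℝ) : meanSigmoidPWL (-b, -a) = meanSigmoidPWL (a, b) := by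
  have reflect (w : ℝ) :
      -b * min (-w) 0 + -a * max (-w) 0 = a * min w 0 + b * max w 0 := by
    rw [← neg_zero, min_neg_neg, max_neg_neg, neg_zero]
    ring
  rw [meanSigmoidPWL, ← integral_neg_eq_self _ (gaussianReal 0 1)]
  simp only [reflect, meanSigmoidPWL]

/-- `h` is continuous but not injective: distinct parameters `(a, b) ≠ (a', b')` can
produce the same mean. -/
theorem meanSigmoidPWL_continuous_not_injective :
    Continuous meanSigmoidPWL ∧ ¬ Function.Injective meanSigmoidPWL := by
  refine ⟨continuous_meanSigmoidPWL, fun hinj => ?_⟩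
  have hpoints := hinj (meanSigmoidPWL_neg_swap 1 2)
  norm_num [Prod.ext_iff] at hpoints
end

section
/- Let E be a real inner product space and let g_B, g_T ∈ E with g_B ≠ g_T. Let α* = max 0 (min 1 (⟪g_T − g_B, g_T⟫ / ‖g_T − g_B‖²)). Then for every α ∈ [0, 1], ‖α*·g_B + (1 − α*)·g_T‖ ≤ ‖α·g_B + (1 − α)·g_T‖; that is, α* minimizes α ↦ ‖α·g_B + (1 − α)·g_T‖² over [0, 1]. -/
open RealInnerProductSpace

/-!
Writing `v = g_T - g_B`, the combination `α g_B + (1 - α) g_T` is the point `g_T - α v` of a line,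
and completing the square gives `‖g_T - α v‖² = ‖v‖² (α - t)² + const` with
`t = ⟪v, g_T⟫ / ‖v‖²`. So minimizing over `[0, 1]` means minimizing `|α - t|`, which the
clamp of `t` to `[0, 1]` does.
-/

namespace Set

theorem abs_projIcc_sub_self_le {α : Type*} [AddCommGroup α] [LinearOrder α]
    [IsOrderedAddMonoid α] {a b : α} (h : a ≤ b) (x : α) {y : α} (hy : y ∈ Icc a b) :
    |(projIcc a b h x : α) - x| ≤ |y - x| := by
  rw [coe_projIcc]
  rcases le_total x a with hxa | hax
  · rw [min_eq_right (hxa.trans h), max_eq_left hxa, abs_of_nonneg (sub_nonneg.2 hxa),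
      abs_of_nonneg (sub_nonneg.2 (hxa.trans hy.1))]
    exact sub_le_sub_right hy.1 x
  rcases le_total b x with hbx | hxb
  · rw [min_eq_left hbx, max_eq_right h, abs_of_nonpos (sub_nonpos.2 hbx),
      abs_of_nonpos (sub_nonpos.2 (hy.2.trans hbx))]
    exact neg_le_neg (sub_le_sub_right hy.2 x)
  · rw [min_eq_right hxb, max_eq_right hax, sub_self, abs_zero]
    exact abs_nonneg _

end Set

section LineMinimization

variable {E : Type*} [NormedAddCommGroup E] [InnerProductSpace ℝ E]

/-- Also true for `v = 0`, where both sides are `‖x‖²` since `⟪v, x⟫ / 0 = 0`. -/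
theorem norm_sub_smul_sq_eq (x v : E) (β : ℝ) :
    ‖x - β • v‖ ^ 2
      = ‖v‖ ^ 2 * (β - ⟪v, x⟫ / ‖v‖ ^ 2) ^ 2 + (‖x‖ ^ 2 - ⟪v, x⟫ ^ 2 / ‖v‖ ^ 2) := by
  rw [norm_sub_sq_real, real_inner_smul_right, norm_smul, mul_pow, Real.norm_eq_abs, sq_abs,
    real_inner_comm]
  rcases eq_or_ne v 0 with rfl | hv
  · simp
  · have : ‖v‖ ^ 2 ≠ 0 := by positivity
    field_simp
    ring

theorem norm_sub_smul_le_of_abs_sub_le {x v : E} {β γ : ℝ}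
    (h : |β - ⟪v, x⟫ / ‖v‖ ^ 2| ≤ |γ - ⟪v, x⟫ / ‖v‖ ^ 2|) :
    ‖x - β • v‖ ≤ ‖x - γ • v‖ := by
  refine (sq_le_sq₀ (norm_nonneg _) (norm_nonneg _)).1 ?_
  rw [norm_sub_smul_sq_eq, norm_sub_smul_sq_eq]
  gcongr ‖v‖ ^ 2 * ?_ + _
  exact sq_le_sq.2 h

end LineMinimization

theorem mgda_two_objective_closed_form_general
    {E : Type*} [NormedAddCommGroup E] [InnerProductSpace ℝ E]
    (gB gT : E) :
    ∀ α ∈ Set.Icc (0 : ℝ) 1,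
      ‖(max 0 (min 1 (⟪gT - gB, gT⟫ / ‖gT - gB‖ ^ 2))) • gB
          + (1 - max 0 (min 1 (⟪gT - gB, gT⟫ / ‖gT - gB‖ ^ 2))) • gT‖
        ≤ ‖α • gB + (1 - α) • gT‖ := by
  intro α hα
  have on_line (β : ℝ) : β • gB + (1 - β) • gT = gT - β • (gT - gB) := by module
  rw [on_line, on_line]
  exact norm_sub_smul_le_of_abs_sub_le (Set.abs_projIcc_sub_self_le zero_le_one _ hα)

/-- Closed-form solution of the two-objective Multiple-Gradient Descent subproblem:
`α* = clamp₍₀,₁₎ (⟪g_T − g_B, g_T⟫ / ‖g_T − g_B‖²)` minimizes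
`α ↦ ‖α g_B + (1 − α) g_T‖` over `[0, 1]`. -/
theorem mgda_two_objective_closed_form
    {E : Type*} [NormedAddCommGroup E] [InnerProductSpace ℝ E]
    (gB gT : E) (hne : gB ≠ gT) :
    ∀ α ∈ Set.Icc (0 : ℝ) 1,
      ‖(max 0 (min 1 (⟪gT - gB, gT⟫ / ‖gT - gB‖ ^ 2))) • gB
          + (1 - max 0 (min 1 (⟪gT - gB, gT⟫ / ‖gT - gB‖ ^ 2))) • gT‖
        ≤ ‖α • gB + (1 - α) • gT‖ :=
  mgda_two_objective_closed_form_general gB gT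
end
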